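/- arXiv:2205.08951 — 2 statements merged into one kernel-verified Lean document; each statement's English description precedes it below -/
import Mathlib

section
/- For each parameter tuple θ = (Â, N̂₁, …, N̂_q, X̂₀, Ĉ) for which the Kronecker matrices 𝒦̂_θ = I⊗Â + Â⊗I + Σ_{i,j=1}^q N̂_i⊗N̂_j k_{ij} and 𝒦̃_θ = I⊗A + Â⊗I + Σ_{i,j=1}^q N̂_i⊗N_j k_{ij} are invertible, let P̂_θ, P̃_θ, Q̂_θ, Q̃_θ be the unique solutions of the algebraic equations L̂_θ[P̂] = −X̂₀X̂₀ᵀ, L̃_θ[P̃] = −X₀X̂₀ᵀ, L̂*_θ[Q̂] = −ĈᵀĈ, L̃*_θ[Q̃] = −CᵀĈ, and define ℰ_∞(θ) = tr(Ĉ P̂_θ Ĉᵀ) − 2 tr(C P̃_θ Ĉᵀ). Suppose that at θ* all eigenvalues of 𝒦 = I⊗A + A⊗I + Σ N_i⊗N_j k_{ij}, of 𝒦̂_{θ*}, and of 𝒦̃_{θ*} have negative real part (mean square asymptotic stability of the full and reduced systems), and that θ* is a local minimum of ℰ_∞. Then at θ*: (a) Ĉ P̂ = C P̃; (b) Q̂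 X̂₀ = Q̃ᵀ X₀; (c) Q̂ P̂ = Q̃ᵀ P̃; (d) for every i = 1,…,q, Q̂ (Σ_{j=1}^q N̂_j k_{ij}) P̂ = Q̃ᵀ (Σ_{j=1}^q N_j k_{ij}) P̃. -/
open Matrix MeasureTheory Filter
open scoped Kronecker Topology

/-- Column-stacking vectorization of a matrix: `vecM X (j, i) = X i j`. -/
def vecM {a b : Type*} (X : Matrix a b ℝ) : b × a → ℝ := fun p => X p.2 p.1

/-- Inverse of column-stacking vectorization. -/
def unvecM {a b : Type*} (v : b × a → ℝ) : Matrix a b ℝ := Matrix.of fun i j => v (j, i)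

/-- (Mixed) Lyapunov-type operator `X ↦ A₁ X + X A₂ᵀ + ∑ᵢⱼ kᵢⱼ • N₁ᵢ X N₂ⱼᵀ`. -/
def lyapM {a b : Type*} [Fintype a] [Fintype b] {q : ℕ}
    (A₁ : Matrix a a ℝ) (A₂ : Matrix b b ℝ)
    (N₁ : Fin q → Matrix a a ℝ) (N₂ : Fin q → Matrix b b ℝ)
    (K : Matrix (Fin q) (Fin q) ℝ) (X : Matrix a b ℝ) : Matrix a b ℝ :=
  A₁ * X + X * A₂ᵀ + ∑ i, ∑ j, K i j • (N₁ i * X * (N₂ j)ᵀ)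

/-- Frobenius adjoint of `lyapM`: `X ↦ A₁ᵀ X + X A₂ + ∑ᵢⱼ kᵢⱼ • N₁ᵢᵀ X N₂ⱼ`. -/
def lyapAdjM {a b : Type*} [Fintype a] [Fintype b] {q : ℕ}
    (A₁ : Matrix a a ℝ) (A₂ : Matrix b b ℝ)
    (N₁ : Fin q → Matrix a a ℝ) (N₂ : Fin q → Matrix b b ℝ)
    (K : Matrix (Fin q) (Fin q) ℝ) (X : Matrix a b ℝ) : Matrix a b ℝ :=
  A₁ᵀ * X + X * A₂ + ∑ i, ∑ j, K i j • ((N₁ i)ᵀ * X * N₂ j)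

/-- Kronecker matrix `𝒦 = I ⊗ A₁ + A₂ ⊗ I + ∑ᵢⱼ kᵢⱼ • (N₂ᵢ ⊗ N₁ⱼ)` associated to `lyapM`. -/
noncomputable def kronM {a b : Type*} [Fintype a] [Fintype b] [DecidableEq a] [DecidableEq b] {q : ℕ}
    (A₁ : Matrix a a ℝ) (A₂ : Matrix b b ℝ)
    (N₁ : Fin q → Matrix a a ℝ) (N₂ : Fin q → Matrix b b ℝ)
    (K : Matrix (Fin q) (Fin q) ℝ) : Matrix (b × a) (b × a) ℝ :=
  (1 : Matrix b b ℝ) ⊗ₖ A₁ + A₂ ⊗ₖ (1 : Matrix a a ℝ) + ∑ i, ∑ j, K i j • (N₂ i ⊗ₖ N₁ j)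

/-- `F` solves the matrix ODE `F' = L (F t)` at every `t ∈ [0,T]` (entrywise). -/
def solvesODE {a b : Type*} (L : Matrix a b ℝ → Matrix a b ℝ)
    (F : ℝ → Matrix a b ℝ) (T : ℝ) : Prop :=
  ∀ t ∈ Set.Icc (0:ℝ) T, ∀ i j, HasDerivAt (fun s => F s i j) (L (F t) i j) t

/-- Entrywise integral `∫₀ᵀ F(t) dt`. -/
noncomputable def intM {a b : Type*} (F : ℝ → Matrix a b ℝ) (T : ℝ) : Matrix a b ℝ :=
  Matrix.of fun i j => ∫ t in (0:ℝ)..T, F t i j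

/-- Explicit solution of a vectorized linear matrix ODE via the matrix exponential. -/
noncomputable def expSolM {a b : Type*} [Fintype a] [Fintype b] [DecidableEq a] [DecidableEq b]
    (Kmat : Matrix (b × a) (b × a) ℝ) (F₀ : Matrix a b ℝ) (t : ℝ) : Matrix a b ℝ :=
  unvecM (NormedSpace.exp (t • Kmat) *ᵥ vecM F₀)

/-- The space of reduced-order coefficients `θ = (Â, (N̂ᵢ), X̂₀, Ĉ)`. -/
abbrev ThetaSp (nh m p q : ℕ) :=
  Matrix (Fin nh) (Fin nh) ℝ × (Fin q → Matrix (Fin nh) (Fin nh) ℝ) ×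
    Matrix (Fin nh) (Fin m) ℝ × Matrix (Fin p) (Fin nh) ℝ

/-- Kronecker matrix `𝒦̂ = I⊗Â + Â⊗I + ∑ kᵢⱼ N̂ᵢ⊗N̂ⱼ` of the reduced system. -/
noncomputable def KhatΘ {nh m p q : ℕ} (K : Matrix (Fin q) (Fin q) ℝ)
    (θ : ThetaSp nh m p q) : Matrix (Fin nh × Fin nh) (Fin nh × Fin nh) ℝ :=
  kronM θ.1 θ.1 θ.2.1 θ.2.1 K

/-- Mixed Kronecker matrix `𝒦̃ = I⊗A + Â⊗I + ∑ kᵢⱼ N̂ᵢ⊗Nⱼ`. -/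
noncomputable def KtilΘ {n nh m p q : ℕ} (A : Matrix (Fin n) (Fin n) ℝ)
    (N : Fin q → Matrix (Fin n) (Fin n) ℝ) (K : Matrix (Fin q) (Fin q) ℝ)
    (θ : ThetaSp nh m p q) : Matrix (Fin nh × Fin n) (Fin nh × Fin n) ℝ :=
  kronM A θ.1 N θ.2.1 K

/-- `P̂_θ`, the unique solution of `𝓛̂_θ[P̂] = −X̂₀X̂₀ᵀ` (via `vec P̂ = −𝒦̂⁻¹ vec(X̂₀X̂₀ᵀ)`). -/
noncomputable def PhatInfΘ {nh m p q : ℕ} (K : Matrix (Fin q) (Fin q) ℝ)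
    (θ : ThetaSp nh m p q) : Matrix (Fin nh) (Fin nh) ℝ :=
  unvecM (-((KhatΘ K θ)⁻¹ *ᵥ vecM (θ.2.2.1 * θ.2.2.1ᵀ)))

/-- `P̃_θ`, the unique solution of `𝓛̃_θ[P̃] = −X₀X̂₀ᵀ`. -/
noncomputable def PtilInfΘ {n nh m p q : ℕ} (A : Matrix (Fin n) (Fin n) ℝ)
    (N : Fin q → Matrix (Fin n) (Fin n) ℝ) (K : Matrix (Fin q) (Fin q) ℝ)
    (X₀ : Matrix (Fin n) (Fin m) ℝ) (θ : ThetaSp nh m p q) :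
    Matrix (Fin n) (Fin nh) ℝ :=
  unvecM (-((KtilΘ A N K θ)⁻¹ *ᵥ vecM (X₀ * θ.2.2.1ᵀ)))

/-- `Q̂_θ`, the unique solution of `𝓛̂*_θ[Q̂] = −ĈᵀĈ`. -/
noncomputable def QhatInfΘ {nh m p q : ℕ} (K : Matrix (Fin q) (Fin q) ℝ)
    (θ : ThetaSp nh m p q) : Matrix (Fin nh) (Fin nh) ℝ :=
  unvecM (-(((KhatΘ K θ)ᵀ)⁻¹ *ᵥ vecM (θ.2.2.2ᵀ * θ.2.2.2)))

/-- `Q̃_θ`, the unique solution of `𝓛̃*_θ[Q̃] = −CᵀĈ`. -/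
noncomputable def QtilInfΘ {n nh m p q : ℕ} (A : Matrix (Fin n) (Fin n) ℝ)
    (N : Fin q → Matrix (Fin n) (Fin n) ℝ) (K : Matrix (Fin q) (Fin q) ℝ)
    (C : Matrix (Fin p) (Fin n) ℝ) (θ : ThetaSp nh m p q) :
    Matrix (Fin n) (Fin nh) ℝ :=
  unvecM (-(((KtilΘ A N K θ)ᵀ)⁻¹ *ᵥ vecM (Cᵀ * θ.2.2.2)))

/-- The limit error measure `ℰ_∞(θ) = tr(Ĉ P̂_θ Ĉᵀ) − 2 tr(C P̃_θ Ĉᵀ)`. -/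
noncomputable def EInfΘ {n nh m p q : ℕ} (A : Matrix (Fin n) (Fin n) ℝ)
    (N : Fin q → Matrix (Fin n) (Fin n) ℝ) (K : Matrix (Fin q) (Fin q) ℝ)
    (X₀ : Matrix (Fin n) (Fin m) ℝ) (C : Matrix (Fin p) (Fin n) ℝ)
    (θ : ThetaSp nh m p q) : ℝ :=
  (θ.2.2.2 * PhatInfΘ K θ * θ.2.2.2ᵀ).trace -
    2 * (C * PtilInfΘ A N K X₀ θ * θ.2.2.2ᵀ).trace

/-- All eigenvalues of a real square matrix have negative real part. -/
def specNeg {ι : Type*} [Fintype ι] [DecidableEq ι] (M : Matrix ι ι ℝ) : Prop :=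
  ∀ μ ∈ spectrum ℂ (M.map (algebraMap ℝ ℂ)), μ.re < 0

/-!
After vectorization, each of the two terms of `ℰ_∞(θ + t • δ)` has the form `u(t) ⬝ᵥ p(t)` with
`p(t) = -𝒦(t)⁻¹ w(t)`. Differentiating the inverse and introducing the adjoint solution
`q = -𝒦⁻ᵀ u` (the vectorized `Q̂`, `Q̃`) gives the derivative `u' ⬝ᵥ p + q ⬝ᵥ (𝒦' p + w')`,
in which the derivative of `p` no longer appears. Moving `δ` out of the Kronecker products turns
this into the Frobenius pairing of `δ` with a gradient whose four blocks are the differences of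
the two sides of (a)–(d); the symmetry of `P̂`, `Q̂` and `K` merges the two occurrences of `Â`
and of each `N̂ᵢ` in `𝒦̂`. At a local minimum every directional derivative vanishes, and pairing
each block of the gradient with itself shows that it is zero.
-/

-- Any norm gives the same derivatives; the `L∞`-operator norm also makes square matrices a
-- normed algebra, which the derivative of `Ring.inverse` needs.
attribute [local instance] Matrix.linftyOpNormedAddCommGroup Matrix.linftyOpNormedSpace
  Matrix.linftyOpNormedRing Matrix.linftyOpNormedAlgebra

section Vectorization

variable {a b c d ι : Type*}

@[simp] theorem vecM_zero : vecM (0 : Matrix a b ℝ) = 0 := rfl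

@[simp] theorem vecM_add (X Y : Matrix a b ℝ) : vecM (X + Y) = vecM X + vecM Y := rfl

@[simp] theorem vecM_sub (X Y : Matrix a b ℝ) : vecM (X - Y) = vecM X - vecM Y := rfl

@[simp] theorem vecM_smul (r : ℝ) (X : Matrix a b ℝ) : vecM (r • X) = r • vecM X := rfl

@[simp] theorem vecM_sum (s : Finset ι) (X : ι → Matrix a b ℝ) :
    vecM (∑ i ∈ s, X i) = ∑ i ∈ s, vecM (X i) := by
  ext
  simp [vecM, Matrix.sum_apply]

@[simp] theorem vecM_unvecM (v : b × a → ℝ) : vecM (unvecM v) = v := rfl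

theorem vecM_injective : Function.Injective (vecM : Matrix a b ℝ → b × a → ℝ) :=
  fun _ _ h => Matrix.ext fun i j => congrFun h (j, i)

variable [Fintype a] [Fintype b]

theorem vecM_dotProduct_vecM (X Y : Matrix a b ℝ) : vecM X ⬝ᵥ vecM Y = (Xᵀ * Y).trace := by
  simp only [dotProduct, vecM, trace, diag, mul_apply, transpose_apply, Fintype.sum_prod_type]

theorem eq_zero_of_forall_vecM_dotProduct_eq_zero {G : Matrix a b ℝ}
    (h : ∀ Δ : Matrix a b ℝ, vecM G ⬝ᵥ vecM Δ = 0) : G = 0 :=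
  vecM_injective (dotProduct_self_eq_zero.1 (h G))

theorem vecM_mul_dotProduct [Fintype c] (X : Matrix a c ℝ) (Y : Matrix c b ℝ)
    (Z : Matrix a b ℝ) : vecM (X * Y) ⬝ᵥ vecM Z = vecM Y ⬝ᵥ vecM (Xᵀ * Z) := by
  rw [vecM_dotProduct_vecM, vecM_dotProduct_vecM, transpose_mul, Matrix.mul_assoc]

theorem vecM_mul_dotProduct' [Fintype c] (X : Matrix a c ℝ) (Y : Matrix c b ℝ)
    (Z : Matrix a b ℝ) : vecM (X * Y) ⬝ᵥ vecM Z = vecM X ⬝ᵥ vecM (Z * Yᵀ) := by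
  rw [vecM_dotProduct_vecM, vecM_dotProduct_vecM, transpose_mul, trace_mul_cycle',
    ← Matrix.mul_assoc]

theorem vecM_dotProduct_mul_transpose [Fintype c] (Q : Matrix a b ℝ) (Y : Matrix a c ℝ)
    (Z : Matrix b c ℝ) : vecM Q ⬝ᵥ vecM (Y * Zᵀ) = vecM (Qᵀ * Y) ⬝ᵥ vecM Z := by
  rw [vecM_dotProduct_vecM, vecM_dotProduct_vecM, ← trace_transpose, transpose_mul, transpose_mul,
    transpose_transpose, transpose_mul, transpose_transpose, trace_mul_cycle Yᵀ]

theorem vecM_transpose_mul_dotProduct [Fintype c] (X : Matrix c a ℝ) (Y : Matrix c b ℝ)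
    (P : Matrix a b ℝ) : vecM (Xᵀ * Y) ⬝ᵥ vecM P = vecM (X * P) ⬝ᵥ vecM Y := by
  rw [vecM_mul_dotProduct, transpose_transpose, dotProduct_comm]

theorem vecM_transpose_mul_add_dotProduct [Fintype c] {P : Matrix a a ℝ} (hP : Pᵀ = P)
    (Y Z : Matrix c a ℝ) : vecM (Yᵀ * Z + Zᵀ * Y) ⬝ᵥ vecM P = 2 * (vecM (Z * P) ⬝ᵥ vecM Y) := by
  rw [vecM_add, add_dotProduct, vecM_transpose_mul_dotProduct, vecM_transpose_mul_dotProduct,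
    vecM_mul_dotProduct', hP, dotProduct_comm]
  ring

theorem vecM_dotProduct_mul_transpose_add [Fintype c] {Q : Matrix a a ℝ} (hQ : Qᵀ = Q)
    (Y Z : Matrix a c ℝ) : vecM Q ⬝ᵥ vecM (Y * Zᵀ + Z * Yᵀ) = 2 * (vecM (Q * Z) ⬝ᵥ vecM Y) := by
  rw [vecM_add, dotProduct_add, vecM_dotProduct_mul_transpose, vecM_dotProduct_mul_transpose, hQ,
    vecM_mul_dotProduct, hQ, dotProduct_comm]
  ring

theorem trace_mul_unvecM_mul_transpose [Fintype c] (C₁ : Matrix c a ℝ) (C₂ : Matrix c b ℝ)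
    (v : b × a → ℝ) : (C₁ * unvecM v * C₂ᵀ).trace = vecM (C₁ᵀ * C₂) ⬝ᵥ v := by
  rw [← vecM_unvecM v, vecM_dotProduct_vecM, vecM_unvecM, transpose_mul, transpose_transpose,
    Matrix.mul_assoc, trace_mul_cycle', Matrix.mul_assoc]

theorem kronecker_mulVec_vecM (M₂ : Matrix d b ℝ) (M₁ : Matrix c a ℝ) (X : Matrix a b ℝ) :
    (M₂ ⊗ₖ M₁) *ᵥ vecM X = vecM (M₁ * X * M₂ᵀ) := by
  ext ⟨j, i⟩
  simp only [mulVec, dotProduct, vecM, kroneckerMap_apply, mul_apply, transpose_apply,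
    Fintype.sum_prod_type, Finset.sum_mul]
  exact Finset.sum_congr rfl fun l _ => Finset.sum_congr rfl fun k _ => by ring

theorem vecM_dotProduct_kronecker_mulVec_vecM_left [Fintype c] [Fintype d] (Q : Matrix c d ℝ)
    (Z : Matrix d b ℝ) (X : Matrix c a ℝ) (P : Matrix a b ℝ) :
    vecM Q ⬝ᵥ ((Z ⊗ₖ X) *ᵥ vecM P) = vecM (Q * Z * Pᵀ) ⬝ᵥ vecM X := by
  rw [kronecker_mulVec_vecM, Matrix.mul_assoc, dotProduct_comm, vecM_mul_dotProduct',
    dotProduct_comm, transpose_mul, transpose_transpose, Matrix.mul_assoc]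

theorem vecM_dotProduct_kronecker_mulVec_vecM_right [Fintype c] [Fintype d] (Q : Matrix c d ℝ)
    (Z : Matrix d b ℝ) (X : Matrix c a ℝ) (P : Matrix a b ℝ) :
    vecM Q ⬝ᵥ ((Z ⊗ₖ X) *ᵥ vecM P) = vecM (Qᵀ * X * P) ⬝ᵥ vecM Z := by
  rw [kronecker_mulVec_vecM, vecM_dotProduct_mul_transpose, Matrix.mul_assoc]

end Vectorization

section Lyapunov

variable {a b : Type*} [Fintype a] [Fintype b] {q : ℕ}

theorem kronM_mulVec_vecM [DecidableEq a] [DecidableEq b] (A₁ : Matrix a a ℝ)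
    (A₂ : Matrix b b ℝ) (N₁ : Fin q → Matrix a a ℝ) (N₂ : Fin q → Matrix b b ℝ)
    (K : Matrix (Fin q) (Fin q) ℝ) (X : Matrix a b ℝ) :
    kronM A₁ A₂ N₁ N₂ K *ᵥ vecM X = vecM (lyapM A₁ A₂ N₁ N₂ Kᵀ X) := by
  simp only [kronM, lyapM, add_mulVec, sum_mulVec, smul_mulVec, kronecker_mulVec_vecM,
    transpose_one, Matrix.mul_one, Matrix.one_mul, vecM_add, vecM_sum, vecM_smul, transpose_apply]
  rw [Finset.sum_comm]

theorem kronM_transpose [DecidableEq a] [DecidableEq b] (A₁ : Matrix a a ℝ) (A₂ : Matrix b b ℝ)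
    (N₁ : Fin q → Matrix a a ℝ) (N₂ : Fin q → Matrix b b ℝ) (K : Matrix (Fin q) (Fin q) ℝ) :
    (kronM A₁ A₂ N₁ N₂ K)ᵀ = kronM A₁ᵀ A₂ᵀ (fun i => (N₁ i)ᵀ) (fun i => (N₂ i)ᵀ) K := by
  simp only [kronM, transpose_add, transpose_sum, transpose_smul, ← kroneckerMap_transpose,
    transpose_one]

theorem lyapM_transpose (A : Matrix a a ℝ) (N : Fin q → Matrix a a ℝ)
    (K : Matrix (Fin q) (Fin q) ℝ) (X : Matrix a a ℝ) :
    (lyapM A A N N K X)ᵀ = lyapM A A N N Kᵀ Xᵀ := by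
  simp only [lyapM, transpose_add, transpose_sum, transpose_smul, transpose_mul,
    transpose_transpose, transpose_apply, Matrix.mul_assoc]
  rw [add_comm (Xᵀ * Aᵀ), Finset.sum_comm]

-- `Pᵀ` solves the same Lyapunov equation as `P`, and the solution is unique.
theorem transpose_unvecM_neg_inv_mulVec_kronM [DecidableEq a] (A : Matrix a a ℝ)
    (N : Fin q → Matrix a a ℝ) {K : Matrix (Fin q) (Fin q) ℝ} (hK : K.IsSymm)
    (hM : IsUnit (kronM A A N N K).det) {W : Matrix a a ℝ} (hW : Wᵀ = W) :
    (unvecM (-((kronM A A N N K)⁻¹ *ᵥ vecM W)))ᵀ = unvecM (-((kronM A A N N K)⁻¹ *ᵥ vecM W)) := by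
  set P := unvecM (-((kronM A A N N K)⁻¹ *ᵥ vecM W))
  have hP : kronM A A N N K *ᵥ vecM P = -vecM W := by
    rw [vecM_unvecM, mulVec_neg, mulVec_mulVec, mul_nonsing_inv _ hM, one_mulVec]
  have hL : lyapM A A N N K P = -W := by
    apply vecM_injective
    rw [← hK.eq, ← kronM_mulVec_vecM, hP]
    rfl
  have hPt : kronM A A N N K *ᵥ vecM Pᵀ = -vecM W := by
    rw [kronM_mulVec_vecM, ← lyapM_transpose, hL, transpose_neg, hW]
    rfl
  exact vecM_injective (mulVec_injective_iff_isUnit.2 ((isUnit_iff_isUnit_det _).2 hM)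
    (hPt.trans hP.symm))

theorem vecM_dotProduct_kronecker_sum_mulVec [DecidableEq a] (Q P : Matrix a b ℝ)
    (A' : Matrix b b ℝ) (N : Fin q → Matrix a a ℝ) (N' : Fin q → Matrix b b ℝ)
    (K : Matrix (Fin q) (Fin q) ℝ) :
    vecM Q ⬝ᵥ ((A' ⊗ₖ 1 + ∑ i, ∑ j, K i j • (N' i ⊗ₖ N j)) *ᵥ vecM P) =
      vecM (Qᵀ * P) ⬝ᵥ vecM A' + ∑ i, vecM (Qᵀ * (∑ j, K i j • N j) * P) ⬝ᵥ vecM (N' i) := by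
  simp only [add_mulVec, sum_mulVec, smul_mulVec, dotProduct_add, dotProduct_sum, dotProduct_smul,
    vecM_dotProduct_kronecker_mulVec_vecM_right, Matrix.mul_one, Matrix.mul_sum, Matrix.sum_mul,
    Matrix.mul_smul, Matrix.smul_mul, vecM_sum, vecM_smul, sum_dotProduct, smul_dotProduct]

theorem vecM_dotProduct_kronecker_sum_mulVec_of_symm [DecidableEq a]
    {K : Matrix (Fin q) (Fin q) ℝ} (hK : K.IsSymm) {Q P : Matrix a a ℝ} (hQ : Qᵀ = Q)
    (hP : Pᵀ = P) (A' : Matrix a a ℝ) (N N' : Fin q → Matrix a a ℝ) :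
    vecM Q ⬝ᵥ ((1 ⊗ₖ A' + A' ⊗ₖ 1 + ∑ i, ∑ j, K i j • (N' i ⊗ₖ N j + N i ⊗ₖ N' j)) *ᵥ vecM P) =
      2 * (vecM (Q * P) ⬝ᵥ vecM A' + ∑ i, vecM (Q * (∑ j, K i j • N j) * P) ⬝ᵥ vecM (N' i)) := by
  have hA₁ : vecM Q ⬝ᵥ ((1 ⊗ₖ A') *ᵥ vecM P) = vecM (Q * P) ⬝ᵥ vecM A' := by
    rw [vecM_dotProduct_kronecker_mulVec_vecM_left, Matrix.mul_one, hP]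
  have hA₂ : vecM Q ⬝ᵥ ((A' ⊗ₖ 1) *ᵥ vecM P) = vecM (Q * P) ⬝ᵥ vecM A' := by
    rw [vecM_dotProduct_kronecker_mulVec_vecM_right, Matrix.mul_one, hQ]
  have hN₁ : ∀ i j,
      vecM Q ⬝ᵥ ((N i ⊗ₖ N' j) *ᵥ vecM P) = vecM (Q * N i * P) ⬝ᵥ vecM (N' j) := by
    intro i j
    rw [vecM_dotProduct_kronecker_mulVec_vecM_left, hP]
  have hN₂ : ∀ i j,
      vecM Q ⬝ᵥ ((N' i ⊗ₖ N j) *ᵥ vecM P) = vecM (Q * N j * P) ⬝ᵥ vecM (N' i) := by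
    intro i j
    rw [vecM_dotProduct_kronecker_mulVec_vecM_right, hQ]
  have hswap : ∑ i, ∑ j, K i j * (vecM (Q * N i * P) ⬝ᵥ vecM (N' j)) =
      ∑ i, ∑ j, K i j * (vecM (Q * N j * P) ⬝ᵥ vecM (N' i)) := by
    rw [Finset.sum_comm]
    simp only [hK.apply]
  simp only [add_mulVec, sum_mulVec, smul_mulVec, dotProduct_add, dotProduct_sum, dotProduct_smul,
    smul_eq_mul, mul_add, Finset.sum_add_distrib, hA₁, hA₂, hN₁, hN₂, hswap, Matrix.sum_mul,
    Matrix.mul_sum, Matrix.mul_smul, Matrix.smul_mul, vecM_sum, vecM_smul, sum_dotProduct,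
    smul_dotProduct]
  ring

end Lyapunov

section Calculus

variable {ι l m n o : Type*} {x : ℝ}

theorem IsLocalMin.hasDerivAt_line_eq_zero {E : Type*} [AddCommGroup E] [Module ℝ E]
    [TopologicalSpace E] [ContinuousAdd E] [ContinuousSMul ℝ E] {f : E → ℝ} {θ δ : E} {d : ℝ}
    (hf : IsLocalMin f θ) (hd : HasDerivAt (fun t : ℝ => f (θ + t • δ)) d 0) : d = 0 := by
  have hline : IsLocalMin (fun t : ℝ => f (θ + t • δ)) 0 :=
    IsLocalMin.comp_continuous (g := fun t : ℝ => θ + t • δ) (by simpa using hf) (by fun_prop)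
  exact hline.hasDerivAt_eq_zero hd

theorem hasDerivAt_add_smul {E : Type*} [NormedAddCommGroup E] [NormedSpace ℝ E] (a v : E) :
    HasDerivAt (fun t : ℝ => a + t • v) v x := by
  simpa using ((hasDerivAt_id x).smul_const v).const_add a

theorem hasDerivAt_matrix_iff [Fintype n] {F : ℝ → Matrix m n ℝ} {F' : Matrix m n ℝ} :
    HasDerivAt F F' x ↔ ∀ i j, HasDerivAt (fun t => F t i j) (F' i j) x :=
  hasDerivAt_pi.trans (forall_congr' fun _ => hasDerivAt_pi)

theorem HasDerivAt.vecM [Fintype n] {F : ℝ → Matrix m n ℝ} {F' : Matrix m n ℝ}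
    (hF : HasDerivAt F F' x) : HasDerivAt (fun t => _root_.vecM (F t)) (_root_.vecM F') x :=
  hasDerivAt_pi.2 fun p => hasDerivAt_matrix_iff.1 hF p.2 p.1

theorem HasDerivAt.dotProduct [Fintype ι] {u v : ℝ → ι → ℝ} {u' v' : ι → ℝ}
    (hu : HasDerivAt u u' x) (hv : HasDerivAt v v' x) :
    HasDerivAt (fun t => u t ⬝ᵥ v t) (u' ⬝ᵥ v x + u x ⬝ᵥ v') x := by
  simp only [_root_.dotProduct, ← Finset.sum_add_distrib]
  exact HasDerivAt.fun_sum fun i _ => (hasDerivAt_pi.1 hu i).mul (hasDerivAt_pi.1 hv i)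

theorem HasDerivAt.mulVec [Fintype n] {M : ℝ → Matrix m n ℝ} {M' : Matrix m n ℝ}
    {v : ℝ → n → ℝ} {v' : n → ℝ} (hM : HasDerivAt M M' x) (hv : HasDerivAt v v' x) :
    HasDerivAt (fun t => M t *ᵥ v t) (M' *ᵥ v x + M x *ᵥ v') x :=
  hasDerivAt_pi.2 fun i => (hasDerivAt_pi.1 hM i).dotProduct hv

theorem HasDerivAt.matrix_transpose [Fintype m] [Fintype n] {F : ℝ → Matrix m n ℝ}
    {F' : Matrix m n ℝ} (hF : HasDerivAt F F' x) : HasDerivAt (fun t => (F t)ᵀ) F'ᵀ x :=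
  hasDerivAt_matrix_iff.2 fun i j => hasDerivAt_matrix_iff.1 hF j i

theorem HasDerivAt.matrix_mul [Fintype n] [Fintype o] {F : ℝ → Matrix m n ℝ}
    {G : ℝ → Matrix n o ℝ} {F' : Matrix m n ℝ} {G' : Matrix n o ℝ} (hF : HasDerivAt F F' x)
    (hG : HasDerivAt G G' x) : HasDerivAt (fun t => F t * G t) (F' * G x + F x * G') x :=
  hasDerivAt_matrix_iff.2 fun i j =>
    (hasDerivAt_pi.1 hF i).dotProduct (hasDerivAt_pi.1 hG.matrix_transpose j)

theorem HasDerivAt.kronecker [Fintype m] [Fintype o] {F : ℝ → Matrix l m ℝ}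
    {G : ℝ → Matrix n o ℝ} {F' : Matrix l m ℝ} {G' : Matrix n o ℝ} (hF : HasDerivAt F F' x)
    (hG : HasDerivAt G G' x) : HasDerivAt (fun t => F t ⊗ₖ G t) (F' ⊗ₖ G x + F x ⊗ₖ G') x := by
  rw [hasDerivAt_matrix_iff] at *
  rintro ⟨i₁, i₂⟩ ⟨j₁, j₂⟩
  exact (hF i₁ j₁).mul (hG i₂ j₂)

theorem HasDerivAt.matrix_inv [Fintype ι] [DecidableEq ι] {M : ℝ → Matrix ι ι ℝ}
    {M' : Matrix ι ι ℝ} (hM : HasDerivAt M M' x) (hx : IsUnit (M x).det) :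
    HasDerivAt (fun t => (M t)⁻¹) (-((M x)⁻¹ * M' * (M x)⁻¹)) x := by
  have h := (hasFDerivAt_ringInverse (𝕜 := ℝ) ((isUnit_iff_isUnit_det _).2 hx).unit).comp_hasDerivAt
    x hM
  rw [show (fun t => (M t)⁻¹) = Ring.inverse ∘ M from funext fun t => nonsing_inv_eq_ringInverse _]
  refine h.congr_deriv ?_
  simp [mul_assoc, nonsing_inv_eq_ringInverse]

theorem HasDerivAt.kronM [Fintype m] [Fintype n] [DecidableEq m] [DecidableEq n] {q : ℕ}
    {A₁ : ℝ → Matrix m m ℝ} {A₂ : ℝ → Matrix n n ℝ} {N₁ : ℝ → Fin q → Matrix m m ℝ}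
    {N₂ : ℝ → Fin q → Matrix n n ℝ} {A₁' : Matrix m m ℝ} {A₂' : Matrix n n ℝ}
    {N₁' : Fin q → Matrix m m ℝ} {N₂' : Fin q → Matrix n n ℝ} (K : Matrix (Fin q) (Fin q) ℝ)
    (hA₁ : HasDerivAt A₁ A₁' x) (hA₂ : HasDerivAt A₂ A₂' x) (hN₁ : HasDerivAt N₁ N₁' x)
    (hN₂ : HasDerivAt N₂ N₂' x) :
    HasDerivAt (fun t => _root_.kronM (A₁ t) (A₂ t) (N₁ t) (N₂ t) K)
      (1 ⊗ₖ A₁' + A₂' ⊗ₖ 1 + ∑ i, ∑ j, K i j • (N₂' i ⊗ₖ N₁ x j + N₂ x i ⊗ₖ N₁' j)) x := by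
  have h := (((hasDerivAt_const x (1 : Matrix n n ℝ)).kronecker hA₁).fun_add
    (hA₂.kronecker (hasDerivAt_const x (1 : Matrix m m ℝ)))).fun_add
    (HasDerivAt.fun_sum (u := Finset.univ) fun i _ => HasDerivAt.fun_sum (u := Finset.univ)
      fun j _ => ((hasDerivAt_pi.1 hN₂ i).kronecker (hasDerivAt_pi.1 hN₁ j)).const_smul (K i j))
  exact h.congr_deriv (by simp [smul_add])

theorem hasDerivAt_dotProduct_neg_inv_mulVec [Fintype ι] [DecidableEq ι] {u w : ℝ → ι → ℝ}
    {u' w' : ι → ℝ} {M : ℝ → Matrix ι ι ℝ} {M' : Matrix ι ι ℝ} (hu : HasDerivAt u u' x)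
    (hM : HasDerivAt M M' x) (hw : HasDerivAt w w' x) (hx : IsUnit (M x).det) :
    HasDerivAt (fun t => u t ⬝ᵥ -((M t)⁻¹ *ᵥ w t))
      (u' ⬝ᵥ -((M x)⁻¹ *ᵥ w x) + -((M x)ᵀ⁻¹ *ᵥ u x) ⬝ᵥ (M' *ᵥ -((M x)⁻¹ *ᵥ w x) + w')) x := by
  refine (hu.dotProduct ((hM.matrix_inv hx).mulVec hw).neg).congr_deriv ?_
  rw [← transpose_nonsing_inv, mulVec_transpose, neg_dotProduct, ← dotProduct_mulVec]
  simp only [neg_mulVec, mulVec_neg, mulVec_add, mulVec_mulVec, dotProduct_neg, dotProduct_add,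
    neg_add, neg_neg, Matrix.mul_assoc, Pi.neg_apply]

end Calculus

theorem specNeg.isUnit_det {ι : Type*} [Fintype ι] [DecidableEq ι] {M : Matrix ι ι ℝ}
    (h : specNeg M) : IsUnit M.det := by
  rw [isUnit_iff_ne_zero]
  intro hdet
  have h0 : (0 : ℂ) ∈ spectrum ℂ (M.map (algebraMap ℝ ℂ)) := by
    rw [spectrum.zero_mem_iff, isUnit_iff_isUnit_det, ← RingHom.mapMatrix_apply,
      ← RingHom.map_det]
    simp [hdet]
  simpa using h 0 h0

section ErrorMeasure

variable {n nh m p q : ℕ} (A : Matrix (Fin n) (Fin n) ℝ) (N : Fin q → Matrix (Fin n) (Fin n) ℝ)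
  {K : Matrix (Fin q) (Fin q) ℝ} (X₀ : Matrix (Fin n) (Fin m) ℝ) (C : Matrix (Fin p) (Fin n) ℝ)

theorem PhatInfΘ_transpose (hK : K.IsSymm) {θ : ThetaSp nh m p q} (h : IsUnit (KhatΘ K θ).det) :
    (PhatInfΘ K θ)ᵀ = PhatInfΘ K θ :=
  transpose_unvecM_neg_inv_mulVec_kronM _ _ hK h (by rw [transpose_mul, transpose_transpose])

theorem QhatInfΘ_transpose (hK : K.IsSymm) {θ : ThetaSp nh m p q} (h : IsUnit (KhatΘ K θ).det) :
    (QhatInfΘ K θ)ᵀ = QhatInfΘ K θ := by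
  have hT := transpose_unvecM_neg_inv_mulVec_kronM θ.1ᵀ (fun i => (θ.2.1 i)ᵀ) hK
    (by rwa [← kronM_transpose, det_transpose]) (W := θ.2.2.2ᵀ * θ.2.2.2)
    (by rw [transpose_mul, transpose_transpose])
  rwa [← kronM_transpose] at hT

theorem EInfΘ_eq_dotProduct (θ : ThetaSp nh m p q) :
    EInfΘ A N K X₀ C θ =
      vecM (θ.2.2.2ᵀ * θ.2.2.2) ⬝ᵥ -((KhatΘ K θ)⁻¹ *ᵥ vecM (θ.2.2.1 * θ.2.2.1ᵀ)) -
        2 * (vecM (Cᵀ * θ.2.2.2) ⬝ᵥ -((KtilΘ A N K θ)⁻¹ *ᵥ vecM (X₀ * θ.2.2.1ᵀ))) := by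
  rw [EInfΘ, PhatInfΘ, PtilInfΘ, trace_mul_unvecM_mul_transpose, trace_mul_unvecM_mul_transpose]

theorem hasDerivAt_EInfΘ_line (hK : K.IsSymm) {θ : ThetaSp nh m p q}
    (hhat : IsUnit (KhatΘ K θ).det) (htil : IsUnit (KtilΘ A N K θ).det) (δ : ThetaSp nh m p q) :
    HasDerivAt (fun t : ℝ => EInfΘ A N K X₀ C (θ + t • δ))
      (2 * (vecM (QhatInfΘ K θ * PhatInfΘ K θ - (QtilInfΘ A N K C θ)ᵀ * PtilInfΘ A N K X₀ θ) ⬝ᵥ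
          vecM δ.1 +
        ∑ i, vecM (QhatInfΘ K θ * (∑ j, K i j • θ.2.1 j) * PhatInfΘ K θ -
          (QtilInfΘ A N K C θ)ᵀ * (∑ j, K i j • N j) * PtilInfΘ A N K X₀ θ) ⬝ᵥ vecM (δ.2.1 i) +
        vecM (QhatInfΘ K θ * θ.2.2.1 - (QtilInfΘ A N K C θ)ᵀ * X₀) ⬝ᵥ vecM δ.2.2.1 +
        vecM (θ.2.2.2 * PhatInfΘ K θ - C * PtilInfΘ A N K X₀ θ) ⬝ᵥ vecM δ.2.2.2)) 0 := by
  have hA : HasDerivAt (fun t : ℝ => (θ + t • δ).1) δ.1 0 := hasDerivAt_add_smul θ.1 δ.1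
  have hN : HasDerivAt (fun t : ℝ => (θ + t • δ).2.1) δ.2.1 0 := hasDerivAt_add_smul θ.2.1 δ.2.1
  have hX : HasDerivAt (fun t : ℝ => (θ + t • δ).2.2.1) δ.2.2.1 0 :=
    hasDerivAt_add_smul θ.2.2.1 δ.2.2.1
  have hC : HasDerivAt (fun t : ℝ => (θ + t • δ).2.2.2) δ.2.2.2 0 :=
    hasDerivAt_add_smul θ.2.2.2 δ.2.2.2
  have hKhat : HasDerivAt (fun t : ℝ => KhatΘ K (θ + t • δ)) (1 ⊗ₖ δ.1 + δ.1 ⊗ₖ 1 +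
      ∑ i, ∑ j, K i j • (δ.2.1 i ⊗ₖ θ.2.1 j + θ.2.1 i ⊗ₖ δ.2.1 j)) 0 :=
    (HasDerivAt.kronM K hA hA hN hN).congr_deriv (by simp)
  have hKtil : HasDerivAt (fun t : ℝ => KtilΘ A N K (θ + t • δ))
      (δ.1 ⊗ₖ 1 + ∑ i, ∑ j, K i j • (δ.2.1 i ⊗ₖ N j)) 0 :=
    (HasDerivAt.kronM K (hasDerivAt_const 0 A) hA (hasDerivAt_const 0 N) hN).congr_deriv (by simp)
  have hEhat := hasDerivAt_dotProduct_neg_inv_mulVec (hC.matrix_transpose.matrix_mul hC).vecM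
    hKhat (hX.matrix_mul hX.matrix_transpose).vecM (by simpa using hhat)
  have hEtil := hasDerivAt_dotProduct_neg_inv_mulVec ((hasDerivAt_const 0 Cᵀ).matrix_mul hC).vecM
    hKtil ((hasDerivAt_const 0 X₀).matrix_mul hX.matrix_transpose).vecM (by simpa using htil)
  simp only [EInfΘ_eq_dotProduct]
  refine (hEhat.sub (hEtil.const_mul 2)).congr_deriv ?_
  simp only [zero_smul, add_zero, Matrix.zero_mul, zero_add]
  change vecM _ ⬝ᵥ vecM (PhatInfΘ K θ) + vecM (QhatInfΘ K θ) ⬝ᵥ (_ *ᵥ vecM (PhatInfΘ K θ) + _) -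
    2 * (vecM _ ⬝ᵥ vecM (PtilInfΘ A N K X₀ θ) +
      vecM (QtilInfΘ A N K C θ) ⬝ᵥ (_ *ᵥ vecM (PtilInfΘ A N K X₀ θ) + _)) = _
  rw [dotProduct_add, dotProduct_add, vecM_dotProduct_kronecker_sum_mulVec_of_symm hK
    (QhatInfΘ_transpose hK hhat) (PhatInfΘ_transpose hK hhat), vecM_dotProduct_kronecker_sum_mulVec,
    vecM_transpose_mul_add_dotProduct (PhatInfΘ_transpose hK hhat),
    vecM_dotProduct_mul_transpose_add (QhatInfΘ_transpose hK hhat), vecM_transpose_mul_dotProduct,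
    vecM_dotProduct_mul_transpose]
  simp only [vecM_sub, sub_dotProduct, Finset.sum_sub_distrib]
  ring

end ErrorMeasure

theorem stmt_12_general {n nh m p q : ℕ}
    (A : Matrix (Fin n) (Fin n) ℝ) (N : Fin q → Matrix (Fin n) (Fin n) ℝ)
    (K : Matrix (Fin q) (Fin q) ℝ) (hK : K.IsSymm)
    (X₀ : Matrix (Fin n) (Fin m) ℝ) (C : Matrix (Fin p) (Fin n) ℝ)
    (θs : ThetaSp nh m p q)
    (hstabHat : specNeg (KhatΘ K θs))
    (hstabTil : specNeg (KtilΘ A N K θs))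
    (hmin : IsLocalMin (EInfΘ A N K X₀ C) θs) :
    θs.2.2.2 * PhatInfΘ K θs = C * PtilInfΘ A N K X₀ θs
    ∧ QhatInfΘ K θs * θs.2.2.1 = (QtilInfΘ A N K C θs)ᵀ * X₀
    ∧ QhatInfΘ K θs * PhatInfΘ K θs = (QtilInfΘ A N K C θs)ᵀ * PtilInfΘ A N K X₀ θs
    ∧ ∀ i : Fin q,
        QhatInfΘ K θs * (∑ j, K i j • θs.2.1 j) * PhatInfΘ K θs =
          (QtilInfΘ A N K C θs)ᵀ * (∑ j, K i j • N j) * PtilInfΘ A N K X₀ θs := by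
  have hgrad := fun δ => hmin.hasDerivAt_line_eq_zero
    (hasDerivAt_EInfΘ_line A N X₀ C hK hstabHat.isUnit_det hstabTil.isUnit_det δ)
  refine ⟨?_, ?_, ?_, fun i => ?_⟩ <;>
    refine sub_eq_zero.1 (eq_zero_of_forall_vecM_dotProduct_eq_zero fun Δ => ?_)
  · simpa using hgrad (0, 0, 0, Δ)
  · simpa using hgrad (0, 0, Δ, 0)
  · simpa using hgrad (Δ, 0, 0, 0)
  · simpa [Pi.single_apply, apply_ite vecM, apply_ite (dotProduct _)] using
      hgrad (0, Pi.single i Δ, 0, 0)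

/-- Theorem 4.1: at a local minimum `θ*` of the limit error measure
`ℰ_∞`, under mean square asymptotic stability of the full and reduced systems (all
eigenvalues of `𝒦`, `𝒦̂`, `𝒦̃` have negative real part), the limit optimality
conditions (a)–(d) hold. -/
theorem stmt_12 {n nh m p q : ℕ}
    (A : Matrix (Fin n) (Fin n) ℝ) (N : Fin q → Matrix (Fin n) (Fin n) ℝ)
    (K : Matrix (Fin q) (Fin q) ℝ) (hK : K.IsSymm)
    (X₀ : Matrix (Fin n) (Fin m) ℝ) (C : Matrix (Fin p) (Fin n) ℝ)
    (θs : ThetaSp nh m p q)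
    (hstabFull : specNeg (kronM A A N N K))
    (hstabHat : specNeg (KhatΘ K θs))
    (hstabTil : specNeg (KtilΘ A N K θs))
    (hmin : IsLocalMin (EInfΘ A N K X₀ C) θs) :
    θs.2.2.2 * PhatInfΘ K θs = C * PtilInfΘ A N K X₀ θs
    ∧ QhatInfΘ K θs * θs.2.2.1 = (QtilInfΘ A N K C θs)ᵀ * X₀
    ∧ QhatInfΘ K θs * PhatInfΘ K θs = (QtilInfΘ A N K C θs)ᵀ * PtilInfΘ A N K X₀ θs
    ∧ ∀ i : Fin q,
        QhatInfΘ K θs * (∑ j, K i j • θs.2.1 j) * PhatInfΘ K θs =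
          (QtilInfΘ A N K C θs)ᵀ * (∑ j, K i j • N j) * PtilInfΘ A N K X₀ θs :=
  stmt_12_general A N K hK X₀ C θs hstabHat hstabTil hmin
end

section
/- Let S ∈ ℝ^{n̂×n̂} be invertible and set Ã = SÂS⁻¹, X̃₀ = SX̂₀, C̃ = ĈS⁻¹, Ñ_i = SN̂_iS⁻¹. Suppose X_∞, Y_∞ ∈ ℝ^{n×n̂} satisfy the algebraic Sylvester-type equations −X₀X̃₀ᵀ = AX_∞ + X_∞Ãᵀ + Σ_{i,j=1}^q N_i X_∞ Ñ_jᵀ k_{ij} and −CᵀC̃ = AᵀY_∞ + Y_∞Ã + Σ_{i,j=1}^q N_iᵀ Y_∞ Ñ_j k_{ij}. Suppose V = X_∞ M_V and W = Y_∞ M_W with M_V, M_W ∈ ℝ^{n̂×n̂} invertible, WᵀV is invertible, the reduced matrices satisfy the fixed-point (projection) relations Â = (WᵀV)⁻¹WᵀAV, N̂_i = (WᵀV)⁻¹WᵀN_iV, X̂₀ = (WᵀV)⁻¹WᵀX₀, Ĉ = CV, and that L̂ and L̃ are invertible. Let P̂, Q̂ ∈ ℝ^{n̂×n̂} and P̃,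 Q̃ ∈ ℝ^{n×n̂} be the unique solutions of L̂[P̂] = −X̂₀X̂₀ᵀ, L̂*[Q̂] = −ĈᵀĈ, L̃[P̃] = −X₀X̂₀ᵀ, L̃*[Q̃] = −CᵀĈ. Then V P̂ = P̃ and W(VᵀW)⁻¹ Q̂ = Q̃. -/
/-! Multiplying the equation for `X_∞` on the right by `S⁻ᵀ` shows that `X_∞ S⁻ᵀ` solves the
equation defining `P̃`; substituting `X_∞ = V M_V⁻¹` into it and applying the oblique projection
`(WᵀV)⁻¹Wᵀ` shows that `M_V⁻¹ S⁻ᵀ` solves the equation defining `P̂`. Dually, `Y_∞ S` and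
`VᵀW M_W⁻¹ S` solve the equations defining `Q̃` and `Q̂`. All four solutions are unique (for the
adjoint operators because `L̂*` and `L̃*` are the Frobenius adjoints of surjective operators), and
the two identities follow by multiplying out. -/

open Matrix MeasureTheory Filter
open scoped Kronecker Topology

section Lyapunov

variable {a b c d : Type*} [Fintype a] [Fintype b] [Fintype c] [Fintype d] {q : ℕ}
  {A₁ : Matrix a a ℝ} {A₂ : Matrix b b ℝ}
  {N₁ : Fin q → Matrix a a ℝ} {N₂ : Fin q → Matrix b b ℝ} {K : Matrix (Fin q) (Fin q) ℝ}

theorem lyapAdjM_eq_lyapM :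
    lyapAdjM A₁ A₂ N₁ N₂ K = lyapM A₁ᵀ A₂ᵀ (fun i => (N₁ i)ᵀ) (fun j => (N₂ j)ᵀ) K := by
  funext X
  simp only [lyapAdjM, lyapM, transpose_transpose]

theorem lyapM_sub (X Y : Matrix a b ℝ) :
    lyapM A₁ A₂ N₁ N₂ K (X - Y) = lyapM A₁ A₂ N₁ N₂ K X - lyapM A₁ A₂ N₁ N₂ K Y := by
  simp only [lyapM, Matrix.mul_sub, Matrix.sub_mul, smul_sub, Finset.sum_sub_distrib]
  abel

theorem trace_transpose_mul_lyapM (X Y : Matrix a b ℝ) :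
    (Yᵀ * lyapM A₁ A₂ N₁ N₂ K X).trace = ((lyapAdjM A₁ A₂ N₁ N₂ K Y)ᵀ * X).trace := by
  simp only [lyapM, lyapAdjM, transpose_add, transpose_mul, transpose_transpose, transpose_sum,
    transpose_smul, Matrix.mul_add, Matrix.add_mul, Matrix.mul_sum, Matrix.sum_mul,
    Matrix.mul_smul, Matrix.smul_mul, trace_add, trace_sum, trace_smul, Matrix.mul_assoc]
  congr 2
  · rw [← Matrix.mul_assoc, trace_mul_comm]
  · refine funext fun i => Finset.sum_congr rfl fun j _ => ?_
    simp only [← Matrix.mul_assoc]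
    rw [trace_mul_comm]
    simp only [Matrix.mul_assoc]

theorem lyapAdjM_injective (hL : Function.Surjective (lyapM A₁ A₂ N₁ N₂ K)) :
    Function.Injective (lyapAdjM A₁ A₂ N₁ N₂ K) := by
  intro Y₁ Y₂ hY
  obtain ⟨X, hX⟩ := hL (Y₁ - Y₂)
  rw [← sub_eq_zero, ← trace_conjTranspose_mul_self_eq_zero_iff,
    conjTranspose_eq_transpose_of_trivial]
  nth_rewrite 2 [← hX]
  rw [trace_transpose_mul_lyapM, lyapAdjM_eq_lyapM, lyapM_sub, ← lyapAdjM_eq_lyapM, hY, sub_self,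
    transpose_zero, Matrix.zero_mul, trace_zero]

theorem mul_lyapM_mul {A₁' : Matrix c c ℝ} {N₁' : Fin q → Matrix c c ℝ}
    (L : Matrix c a ℝ) (R : Matrix a c ℝ)
    (hA : L * A₁ * R = A₁' * (L * R)) (hN : ∀ i, L * N₁ i * R = N₁' i * (L * R))
    (Z : Matrix c b ℝ) :
    L * lyapM A₁ A₂ N₁ N₂ K (R * Z) = lyapM A₁' A₂ N₁' N₂ K (L * R * Z) := by
  simp only [lyapM, Matrix.mul_add, Matrix.mul_sum, Matrix.mul_smul, ← Matrix.mul_assoc, hA, hN]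

theorem lyapM_mul_transpose {A₂' : Matrix c c ℝ} {N₂' : Fin q → Matrix c c ℝ}
    (R : Matrix c b ℝ) (hA : R * A₂ = A₂' * R) (hN : ∀ j, R * N₂ j = N₂' j * R)
    (X : Matrix a b ℝ) :
    lyapM A₁ A₂ N₁ N₂ K X * Rᵀ = lyapM A₁ A₂' N₁ N₂' K (X * Rᵀ) := by
  simp only [lyapM, Matrix.add_mul, Matrix.sum_mul, Matrix.smul_mul, Matrix.mul_assoc,
    ← transpose_mul, hA, hN]

section Similarity

variable [DecidableEq b] {S : Matrix b b ℝ} (hS : IsUnit S.det)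
include hS

theorem lyapM_mul_inv_transpose_of_conj {X : Matrix a b ℝ} {B : Matrix a d ℝ}
    {B₂ : Matrix b d ℝ}
    (hX : lyapM A₁ (S * A₂ * S⁻¹) N₁ (fun j => S * N₂ j * S⁻¹) K X = -(B * (S * B₂)ᵀ)) :
    lyapM A₁ A₂ N₁ N₂ K (X * (S⁻¹)ᵀ) = -(B * B₂ᵀ) := by
  have hconj (M : Matrix b b ℝ) : S⁻¹ * (S * M * S⁻¹) = M * S⁻¹ := by
    rw [← Matrix.mul_assoc, ← Matrix.mul_assoc, nonsing_inv_mul _ hS, Matrix.one_mul]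
  rw [← lyapM_mul_transpose S⁻¹ (hconj A₂) (fun j => hconj (N₂ j)), hX, Matrix.neg_mul,
    Matrix.mul_assoc, ← transpose_mul, nonsing_inv_mul_cancel_left _ _ hS]

theorem lyapAdjM_mul_of_conj {Y : Matrix a b ℝ} {B : Matrix a d ℝ} {B₂ : Matrix d b ℝ}
    (hY : lyapAdjM A₁ (S * A₂ * S⁻¹) N₁ (fun j => S * N₂ j * S⁻¹) K Y = -(B * (B₂ * S⁻¹))) :
    lyapAdjM A₁ A₂ N₁ N₂ K (Y * S) = -(B * B₂) := by
  have hconj (M : Matrix b b ℝ) : Sᵀ * (S * M * S⁻¹)ᵀ = Mᵀ * Sᵀ := by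
    rw [← transpose_mul, ← transpose_mul, nonsing_inv_mul_cancel_right _ _ hS]
  have h := lyapM_mul_transpose (A₁ := A₁ᵀ) (N₁ := fun i => (N₁ i)ᵀ) (K := K) Sᵀ (hconj A₂)
    (fun j => hconj (N₂ j)) Y
  rw [transpose_transpose, ← lyapAdjM_eq_lyapM, ← lyapAdjM_eq_lyapM] at h
  rw [← h, hY, Matrix.neg_mul, Matrix.mul_assoc, nonsing_inv_mul_cancel_right _ _ hS]

end Similarity

section PetrovGalerkin

variable [DecidableEq c] {V W : Matrix a c ℝ} (hG : IsUnit (Wᵀ * V).det)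
  {Ahat : Matrix c c ℝ} {Nhat : Fin q → Matrix c c ℝ}
  (hA : Ahat = (Wᵀ * V)⁻¹ * Wᵀ * A₁ * V) (hN : ∀ i, Nhat i = (Wᵀ * V)⁻¹ * Wᵀ * N₁ i * V)
include hG hA hN

theorem lyapM_of_petrovGalerkin {B : Matrix a d ℝ} {Bhat : Matrix c d ℝ} {B₂ : Matrix b d ℝ}
    (hB : Bhat = (Wᵀ * V)⁻¹ * Wᵀ * B) {Z : Matrix c b ℝ}
    (hZ : lyapM A₁ A₂ N₁ N₂ K (V * Z) = -(B * B₂ᵀ)) :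
    lyapM Ahat A₂ Nhat N₂ K Z = -(Bhat * B₂ᵀ) := by
  have hproj : (Wᵀ * V)⁻¹ * Wᵀ * V = 1 := by rw [Matrix.mul_assoc, nonsing_inv_mul _ hG]
  have h := mul_lyapM_mul (A₁ := A₁) (A₁' := Ahat) (N₁ := N₁) (N₁' := Nhat) (A₂ := A₂)
    (N₂ := N₂) (K := K) ((Wᵀ * V)⁻¹ * Wᵀ) V (by rw [hproj, Matrix.mul_one, hA])
    (fun i => by rw [hproj, Matrix.mul_one, hN]) Z
  rw [hproj, Matrix.one_mul, hZ] at h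
  rw [← h, hB, Matrix.mul_neg]
  simp only [Matrix.mul_assoc]

theorem lyapAdjM_of_petrovGalerkin {C : Matrix d a ℝ} {Chat : Matrix d c ℝ} {C₂ : Matrix d b ℝ}
    (hC : Chat = C * V) {Z : Matrix c b ℝ}
    (hZ : lyapAdjM A₁ A₂ N₁ N₂ K (W * Z) = -(Cᵀ * C₂)) :
    lyapAdjM Ahat A₂ Nhat N₂ K (Vᵀ * W * Z) = -(Chatᵀ * C₂) := by
  have hproj (M : Matrix a a ℝ) :
      Vᵀ * Mᵀ * W = ((Wᵀ * V)⁻¹ * Wᵀ * M * V)ᵀ * (Vᵀ * W) := by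
    apply transpose_injective
    simp only [transpose_mul, transpose_transpose, ← Matrix.mul_assoc, mul_nonsing_inv _ hG,
      Matrix.one_mul]
  have h := mul_lyapM_mul (A₁ := A₁ᵀ) (A₁' := Ahatᵀ) (N₁ := fun i => (N₁ i)ᵀ)
    (N₁' := fun i => (Nhat i)ᵀ) (A₂ := A₂ᵀ) (N₂ := fun j => (N₂ j)ᵀ) (K := K) Vᵀ W
    (by rw [hA, hproj]) (fun i => by rw [hN, hproj]) Z
  rw [← lyapAdjM_eq_lyapM, ← lyapAdjM_eq_lyapM, hZ] at h
  rw [← h, hC, transpose_mul, Matrix.mul_neg, Matrix.mul_assoc]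

end PetrovGalerkin

end Lyapunov

theorem stmt_15_general {n nh m p q : ℕ}
    (A : Matrix (Fin n) (Fin n) ℝ) (N : Fin q → Matrix (Fin n) (Fin n) ℝ)
    (K : Matrix (Fin q) (Fin q) ℝ)
    (X₀ : Matrix (Fin n) (Fin m) ℝ) (C : Matrix (Fin p) (Fin n) ℝ)
    (Ahat : Matrix (Fin nh) (Fin nh) ℝ) (Nhat : Fin q → Matrix (Fin nh) (Fin nh) ℝ)
    (X0hat : Matrix (Fin nh) (Fin m) ℝ) (Chat : Matrix (Fin p) (Fin nh) ℝ)
    (S : Matrix (Fin nh) (Fin nh) ℝ) (hS : IsUnit S)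
    (Xinf Yinf : Matrix (Fin n) (Fin nh) ℝ)
    (hXinf : -(X₀ * (S * X0hat)ᵀ) =
      A * Xinf + Xinf * (S * Ahat * S⁻¹)ᵀ +
        ∑ i, ∑ j, K i j • (N i * Xinf * (S * Nhat j * S⁻¹)ᵀ))
    (hYinf : -(Cᵀ * (Chat * S⁻¹)) =
      Aᵀ * Yinf + Yinf * (S * Ahat * S⁻¹) +
        ∑ i, ∑ j, K i j • ((N i)ᵀ * Yinf * (S * Nhat j * S⁻¹)))
    (V W : Matrix (Fin n) (Fin nh) ℝ)
    (MV MW : Matrix (Fin nh) (Fin nh) ℝ) (hMV : IsUnit MV) (hMW : IsUnit MW)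
    (hV : V = Xinf * MV) (hW : W = Yinf * MW)
    (hWV : IsUnit (Wᵀ * V))
    (hAhat : Ahat = (Wᵀ * V)⁻¹ * Wᵀ * A * V)
    (hNhat : ∀ i, Nhat i = (Wᵀ * V)⁻¹ * Wᵀ * N i * V)
    (hX0hat : X0hat = (Wᵀ * V)⁻¹ * Wᵀ * X₀)
    (hChat : Chat = C * V)
    (hLhat : Function.Bijective (lyapM Ahat Ahat Nhat Nhat K))
    (hLtil : Function.Bijective (lyapM A Ahat N Nhat K))
    (Phat Qhat : Matrix (Fin nh) (Fin nh) ℝ) (Ptil Qtil : Matrix (Fin n) (Fin nh) ℝ)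
    (hPhat : lyapM Ahat Ahat Nhat Nhat K Phat = -(X0hat * X0hatᵀ))
    (hQhat : lyapAdjM Ahat Ahat Nhat Nhat K Qhat = -(Chatᵀ * Chat))
    (hPtil : lyapM A Ahat N Nhat K Ptil = -(X₀ * X0hatᵀ))
    (hQtil : lyapAdjM A Ahat N Nhat K Qtil = -(Cᵀ * Chat)) :
    V * Phat = Ptil ∧ W * (Vᵀ * W)⁻¹ * Qhat = Qtil := by
  have hSd : IsUnit S.det := (isUnit_iff_isUnit_det S).mp hS
  have hGd : IsUnit (Wᵀ * V).det := (isUnit_iff_isUnit_det _).mp hWV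
  have hHd : IsUnit (Vᵀ * W).det := by
    rwa [← det_transpose, transpose_mul, transpose_transpose]
  have hXinf_V : Xinf = V * MV⁻¹ := by
    rw [hV, mul_nonsing_inv_cancel_right _ _ ((isUnit_iff_isUnit_det _).mp hMV)]
  have hYinf_W : Yinf = W * MW⁻¹ := by
    rw [hW, mul_nonsing_inv_cancel_right _ _ ((isUnit_iff_isUnit_det _).mp hMW)]
  have hPtil_eq : Ptil = Xinf * (S⁻¹)ᵀ :=
    hLtil.injective <| hPtil.trans (lyapM_mul_inv_transpose_of_conj hSd hXinf.symm).symm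
  have hQtil_eq : Qtil = Yinf * S :=
    lyapAdjM_injective hLtil.surjective <| hQtil.trans (lyapAdjM_mul_of_conj hSd hYinf.symm).symm
  have hPhat_eq : Phat = MV⁻¹ * (S⁻¹)ᵀ := hLhat.injective <| hPhat.trans <| Eq.symm <|
    lyapM_of_petrovGalerkin hGd hAhat hNhat hX0hat <| by
      rw [← Matrix.mul_assoc, ← hXinf_V, ← hPtil_eq, hPtil]
  have hQhat_eq : Qhat = Vᵀ * W * (MW⁻¹ * S) :=
    lyapAdjM_injective hLhat.surjective <| hQhat.trans <| Eq.symm <|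
      lyapAdjM_of_petrovGalerkin hGd hAhat hNhat hChat <| by
        rw [← Matrix.mul_assoc, ← hYinf_W, ← hQtil_eq, hQtil]
  refine ⟨?_, ?_⟩
  · rw [hPhat_eq, hPtil_eq, hXinf_V, Matrix.mul_assoc]
  · rw [hQhat_eq, hQtil_eq, hYinf_W, Matrix.mul_assoc W, nonsing_inv_mul_cancel_left _ _ hHd,
      Matrix.mul_assoc]

/-- Theorem 4.3, first part: for the `T = ∞` Sylvester fixed-point
iteration with `V = X_∞ M_V`, `W = Y_∞ M_W` and projection-form reduced matrices, the
infinite-horizon Gramians satisfy `V P̂ = P̃` and `W (VᵀW)⁻¹ Q̂ = Q̃`. -/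
theorem stmt_15 {n nh m p q : ℕ}
    (A : Matrix (Fin n) (Fin n) ℝ) (N : Fin q → Matrix (Fin n) (Fin n) ℝ)
    (K : Matrix (Fin q) (Fin q) ℝ) (hK : K.IsSymm)
    (X₀ : Matrix (Fin n) (Fin m) ℝ) (C : Matrix (Fin p) (Fin n) ℝ)
    (Ahat : Matrix (Fin nh) (Fin nh) ℝ) (Nhat : Fin q → Matrix (Fin nh) (Fin nh) ℝ)
    (X0hat : Matrix (Fin nh) (Fin m) ℝ) (Chat : Matrix (Fin p) (Fin nh) ℝ)
    (S : Matrix (Fin nh) (Fin nh) ℝ) (hS : IsUnit S)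
    (Xinf Yinf : Matrix (Fin n) (Fin nh) ℝ)
    (hXinf : -(X₀ * (S * X0hat)ᵀ) =
      A * Xinf + Xinf * (S * Ahat * S⁻¹)ᵀ +
        ∑ i, ∑ j, K i j • (N i * Xinf * (S * Nhat j * S⁻¹)ᵀ))
    (hYinf : -(Cᵀ * (Chat * S⁻¹)) =
      Aᵀ * Yinf + Yinf * (S * Ahat * S⁻¹) +
        ∑ i, ∑ j, K i j • ((N i)ᵀ * Yinf * (S * Nhat j * S⁻¹)))
    (V W : Matrix (Fin n) (Fin nh) ℝ)
    (MV MW : Matrix (Fin nh) (Fin nh) ℝ) (hMV : IsUnit MV) (hMW : IsUnit MW)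
    (hV : V = Xinf * MV) (hW : W = Yinf * MW)
    (hWV : IsUnit (Wᵀ * V))
    (hAhat : Ahat = (Wᵀ * V)⁻¹ * Wᵀ * A * V)
    (hNhat : ∀ i, Nhat i = (Wᵀ * V)⁻¹ * Wᵀ * N i * V)
    (hX0hat : X0hat = (Wᵀ * V)⁻¹ * Wᵀ * X₀)
    (hChat : Chat = C * V)
    (hLhat : Function.Bijective (lyapM Ahat Ahat Nhat Nhat K))
    (hLtil : Function.Bijective (lyapM A Ahat N Nhat K))
    (Phat Qhat : Matrix (Fin nh) (Fin nh) ℝ) (Ptil Qtil : Matrix (Fin n) (Fin nh) ℝ)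
    (hPhat : lyapM Ahat Ahat Nhat Nhat K Phat = -(X0hat * X0hatᵀ))
    (hQhat : lyapAdjM Ahat Ahat Nhat Nhat K Qhat = -(Chatᵀ * Chat))
    (hPtil : lyapM A Ahat N Nhat K Ptil = -(X₀ * X0hatᵀ))
    (hQtil : lyapAdjM A Ahat N Nhat K Qtil = -(Cᵀ * Chat)) :
    V * Phat = Ptil ∧ W * (Vᵀ * W)⁻¹ * Qhat = Qtil :=
  stmt_15_general A N K X₀ C Ahat Nhat X0hat Chat S hS Xinf Yinf hXinf hYinf V W MV MW hMV hMW hV hW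
    hWV hAhat hNhat hX0hat hChat hLhat hLtil Phat Qhat Ptil Qtil hPhat hQhat hPtil hQtil
end
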